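/- Let λ = (c, C), where c is an axis-parallel square of diameter |c| with center o = p(c) and C is a cone with apex o whose opening angle is at most arcsin(1/100). Define x ∈ P_large(λ) iff x ∈ C, r_x ≥ 2^10·|c| and | r_x − |xo| | < 5|c|; define y ∈ P_small(λ) iff y ∈ c and r_y ≤ 2|c|. Let v, v', w ∈ P_large(λ) and u, u' ∈ P_small(λ) with r_v > r_{v'}. Suppose the shortest s–u path in the weighted disk graph G contains the edge vu (so d(u) = d(v) + |vu|), the pair v'u' is an edge of G, and w is the predecessor of u' on the shortest s–u' path (so d(u') = d(w) + |wu'|). Then d(w) < d(v) + r_v − 6|c|. -/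

import Mathlib

/-!
In a cone of opening angle at most `arcsin (1/100)` the law of cosines gives
`|xy| ≤ ||xo| - |yo|| + min (|xo|, |yo|) / 70`; as the disks of large points reach to within `5ℓ`
of `o`, any two large points are adjacent. If `|wo| ≤ |vo| / 2`, the edge `vw` alone is shorter than
`r_v - 6ℓ`. Otherwise take the route `s ⇝ v → v' → u'`: from `|vv'| ≤ r_v - r_{v'} + 10ℓ + |vo| / 70`
and `|v'u'| ≤ r_{v'} + 2ℓ` we get `d(u') ≤ d(v) + r_v + 12ℓ + |wo| / 35`, whereas
`d(u') = d(w) + |wu'| ≥ d(w) + |wo| - ℓ/2` and `|wo| > 1000ℓ`.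
-/

noncomputable section

/-- Points of the plane. -/
abbrev Pt := EuclideanSpace ℝ (Fin 2)

/-- Membership in the closed axis-parallel square of Euclidean diameter `d`
(side `d/√2`) centered at `p`. -/
def inSq (p : Pt) (d : ℝ) (x : Pt) : Prop :=
  ∀ i, |x i - p i| ≤ d / (2 * Real.sqrt 2)

/-- Adjacency in the weighted disk graph: distinct points whose disks intersect. -/
def Adj (r : Pt → ℝ) (x y : Pt) : Prop := x ≠ y ∧ dist x y ≤ r x + r y

/-- A (simple) path from `s` to `v` in the weighted disk graph on `P`. -/
def IsPath (P : Set Pt) (r : Pt → ℝ) (s v : Pt) (L : List Pt) : Prop :=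
  L.head? = some s ∧ L.getLast? = some v ∧ (∀ x ∈ L, x ∈ P) ∧ L.Nodup ∧ L.Chain' (Adj r)

/-- The length of a path: the sum of the Euclidean lengths of its edges. -/
def pathLen : List Pt → ℝ
  | [] => 0
  | [_] => 0
  | a :: b :: L => dist a b + pathLen (b :: L)

/-- Shortest-path distance from `s` to `v` in the weighted disk graph on `P`. -/
def spDist (P : Set Pt) (r : Pt → ℝ) (s v : Pt) : ℝ :=
  sInf (pathLen '' {L | IsPath P r s v L})

lemma pathLen_nonneg : ∀ L : List Pt, 0 ≤ pathLen L
  | [] | [_] => le_rfl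
  | _ :: b :: L => add_nonneg dist_nonneg (pathLen_nonneg (b :: L))

lemma pathLen_le_pathLen_append : ∀ L M : List Pt, pathLen L ≤ pathLen (L ++ M)
  | [], M => pathLen_nonneg M
  | [a], M => pathLen_nonneg (a :: M)
  | _ :: b :: L, M => add_le_add_right (pathLen_le_pathLen_append (b :: L) M) _

lemma pathLen_concat {x : Pt} (y : Pt) : ∀ {L : List Pt}, L.getLast? = some x →
    pathLen (L ++ [y]) = pathLen L + dist x y
  | [], h => by simp at h
  | [a], h => by simp_all [pathLen]
  | a :: b :: L, h => by
      rw [List.getLast?_cons_cons] at h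
      have ih := pathLen_concat y h
      simp only [List.cons_append, pathLen] at ih ⊢
      rw [ih, add_assoc]

namespace IsPath

variable {P : Set Pt} {r : Pt → ℝ} {s x y : Pt} {L : List Pt}

lemma concat (hL : IsPath P r s x L) (hxy : Adj r x y) (hyP : y ∈ P) (hy : y ∉ L) :
    IsPath P r s y (L ++ [y]) := by
  obtain ⟨hhead, hlast, hmem, hnodup, hchain⟩ := hL
  refine ⟨?_, List.getLast?_concat, ?_, ?_, ?_⟩
  · cases L with
    | nil => simp at hhead
    | cons a t => simpa using hhead
  · simpa [or_imp, forall_and] using ⟨hmem, hyP⟩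
  · exact List.nodup_append.2 ⟨hnodup, List.nodup_singleton y,
      fun a ha b hb => by rintro rfl; simp_all⟩
  · refine List.isChain_append.2 ⟨hchain, List.isChain_singleton y, ?_⟩
    simp_all

lemma exists_le_of_mem (hL : IsPath P r s x L) (hy : y ∈ L) :
    ∃ L', IsPath P r s y L' ∧ pathLen L' ≤ pathLen L := by
  obtain ⟨hhead, -, hmem, hnodup, hchain⟩ := hL
  obtain ⟨L₁, L₂, rfl⟩ := List.append_of_mem hy
  have hpre : (L₁ ++ [y]) <+: (L₁ ++ y :: L₂) := ⟨L₂, by simp⟩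
  refine ⟨L₁ ++ [y], ⟨?_, List.getLast?_concat, fun z hz => hmem z (hpre.subset hz),
    hnodup.sublist hpre.sublist, hchain.prefix hpre⟩, ?_⟩
  · cases L₁ <;> simpa using hhead
  · simpa using pathLen_le_pathLen_append (L₁ ++ [y]) L₂

lemma exists_le_add_dist (hL : IsPath P r s x L) (hxy : Adj r x y) (hyP : y ∈ P) :
    ∃ L', IsPath P r s y L' ∧ pathLen L' ≤ pathLen L + dist x y := by
  by_cases hy : y ∈ L
  · obtain ⟨L', hL', hle⟩ := hL.exists_le_of_mem hy
    exact ⟨L', hL', hle.trans (le_add_of_nonneg_right dist_nonneg)⟩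
  · exact ⟨_, hL.concat hxy hyP hy, (pathLen_concat y hL.2.1).le⟩

end IsPath

section spDist

variable {P : Set Pt} {r : Pt → ℝ} {s x y : Pt}

lemma spDist_le_pathLen {L : List Pt} (hL : IsPath P r s y L) : spDist P r s y ≤ pathLen L :=
  csInf_le ⟨0, by rintro _ ⟨M, -, rfl⟩; exact pathLen_nonneg M⟩ ⟨L, hL, rfl⟩

lemma spDist_le_spDist_add_dist (hyP : y ∈ P) (hxy : Adj r x y)
    (hx : ∃ L, IsPath P r s x L) : spDist P r s y ≤ spDist P r s x + dist x y := by
  obtain ⟨L, hL⟩ := hx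
  rw [← sub_le_iff_le_add]
  refine le_csInf ⟨_, L, hL, rfl⟩ ?_
  rintro _ ⟨M, hM, rfl⟩
  obtain ⟨M', hM', hle⟩ := hM.exists_le_add_dist hxy hyP
  linarith [spDist_le_pathLen hM']

end spDist

lemma dist_le_half_of_inSq {p x : Pt} {d : ℝ} (h : inSq p d x) : dist x p ≤ d / 2 := by
  have hs : (0 : ℝ) < 2 * √2 := by positivity
  have hd : 0 ≤ d := by
    simpa [div_mul_cancel₀ _ hs.ne'] using mul_nonneg ((abs_nonneg _).trans (h 0)) hs.le
  have hcoord : ∀ i, dist (x i) (p i) ^ 2 ≤ d ^ 2 / 8 := fun i => by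
    have h2 : √2 ^ 2 = 2 := Real.sq_sqrt zero_le_two
    calc dist (x i) (p i) ^ 2 ≤ (d / (2 * √2)) ^ 2 := pow_le_pow_left₀ dist_nonneg (h i) 2
      _ = d ^ 2 / 8 := by rw [div_pow, mul_pow, h2]; norm_num
  rw [EuclideanSpace.dist_eq, Real.sqrt_le_left (by positivity), Fin.sum_univ_two]
  linarith [hcoord 0, hcoord 1]

lemma one_sub_sq_le_cos_arcsin (ε : ℝ) : 1 - ε ^ 2 ≤ Real.cos (Real.arcsin ε) := by
  rw [Real.cos_arcsin, Real.le_sqrt_self_iff]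
  nlinarith [sq_nonneg ε]

section Cone

open EuclideanGeometry

variable {V Q : Type*} [NormedAddCommGroup V] [InnerProductSpace ℝ V] [MetricSpace Q]
  [NormedAddTorsor V Q] {o x y : Q}

lemma dist_sq_le_of_angle_le_arcsin {ε : ℝ} (h : ∠ x o y ≤ Real.arcsin ε) :
    dist x y ^ 2 ≤ (dist x o - dist y o) ^ 2 + 2 * ε ^ 2 * (dist x o * dist y o) := by
  have hcos : 1 - ε ^ 2 ≤ Real.cos (∠ x o y) :=
    (one_sub_sq_le_cos_arcsin ε).trans <| Real.cos_le_cos_of_nonneg_of_le_pi (angle_nonneg _ _ _)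
      ((Real.arcsin_le_pi_div_two ε).trans (by linarith [Real.pi_pos])) h
  have hxy : 0 ≤ dist x o * dist y o := mul_nonneg dist_nonneg dist_nonneg
  nlinarith [law_cos x o y, mul_le_mul_of_nonneg_left hcos hxy]

-- `70` works because `(1 / 70) ^ 2 ≥ 2 * (1 / 100) ^ 2`.
lemma dist_le_abs_sub_add_min_div_of_angle_le (h : ∠ x o y ≤ Real.arcsin (1 / 100)) :
    dist x y ≤ |dist x o - dist y o| + min (dist x o) (dist y o) / 70 := by
  have hsq := dist_sq_le_of_angle_le_arcsin h
  have ha : 0 ≤ dist x o := dist_nonneg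
  have hb : 0 ≤ dist y o := dist_nonneg
  refine le_of_pow_le_pow_left₀ two_ne_zero (by positivity) (hsq.trans ?_)
  rcases le_total (dist x o) (dist y o) with hab | hba
  · rw [abs_of_nonpos (by linarith), min_eq_left hab]
    nlinarith [mul_nonneg ha (sub_nonneg.2 hab)]
  · rw [abs_of_nonneg (by linarith), min_eq_right hba]
    nlinarith [mul_nonneg hb (sub_nonneg.2 hba)]

lemma dist_le_add_of_angle_le_of_abs_sub_lt {ℓ rx ry : ℝ} (h : ∠ x o y ≤ Real.arcsin (1 / 100))
    (hx : |rx - dist x o| < 5 * ℓ) (hy : |ry - dist y o| < 5 * ℓ)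
    (hrx : 5 * ℓ ≤ rx) (hry : 5 * ℓ ≤ ry) : dist x y ≤ rx + ry := by
  have hxy := dist_le_abs_sub_add_min_div_of_angle_le h
  rw [abs_lt] at hx hy
  rcases le_total (dist x o) (dist y o) with hab | hba
  · rw [abs_of_nonpos (by linarith), min_eq_left hab] at hxy
    linarith
  · rw [abs_of_nonneg (by linarith), min_eq_right hba] at hxy
    linarith

end Cone

theorem alarm_down_general
    (P : Set Pt) (r : Pt → ℝ)
    (s : Pt)
    (o : Pt) (ℓ : ℝ) (hℓ : 0 < ℓ)
    (C : Set Pt)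
    (hC : ∀ x ∈ C, ∀ y ∈ C, EuclideanGeometry.angle x o y ≤ Real.arcsin (1 / 100))
    (v v' w u' : Pt)
    (hv'P : v' ∈ P) (hwP : w ∈ P) (hu'P : u' ∈ P)
    -- `v, v', w ∈ P_large(λ)`
    (hvC : v ∈ C) (hvr : 2 ^ 10 * ℓ ≤ r v) (hvo : |r v - dist v o| < 5 * ℓ)
    (hv'C : v' ∈ C) (hv'r : 2 ^ 10 * ℓ ≤ r v') (hv'o : |r v' - dist v' o| < 5 * ℓ)
    (hwC : w ∈ C) (hwr : 2 ^ 10 * ℓ ≤ r w) (hwo : |r w - dist w o| < 5 * ℓ)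
    -- `u, u' ∈ P_small(λ)`
    (hu'c : inSq o ℓ u') (hu'r : r u' ≤ 2 * ℓ)
    (hord : r v' < r v)
    -- connectivity to the source
    (hconnv : ∃ L, IsPath P r s v L)
    -- `v'u'` is an edge of `G`
    (hv'u' : Adj r v' u')
    -- `w` is the predecessor of `u'` on the shortest `s`–`u'` path
    (hdu' : spDist P r s u' = spDist P r s w + dist w u') :
    spDist P r s w < spDist P r s v + r v - 6 * ℓ := by
  have hvo' := abs_lt.1 hvo
  have hwo' := abs_lt.1 hwo
  rcases le_or_gt (2 * dist w o) (dist v o) with hfar | hnear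
  · have hvw := dist_le_abs_sub_add_min_div_of_angle_le (hC v hvC w hwC)
    rw [abs_of_nonneg (by linarith), min_eq_right (by linarith)] at hvw
    have hadj : Adj r v w := ⟨by rintro rfl; linarith,
      dist_le_add_of_angle_le_of_abs_sub_lt (hC v hvC w hwC) hvo hwo (by linarith) (by linarith)⟩
    linarith [spDist_le_spDist_add_dist hwP hadj hconnv]
  · have hvv' := dist_le_abs_sub_add_min_div_of_angle_le (hC v hvC v' hv'C)
    have habs : |dist v o - dist v' o| ≤ r v - r v' + 10 * ℓ := by
      have := abs_lt.1 hv'o; exact abs_le.2 ⟨by linarith, by linarith⟩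
    have hadj : Adj r v v' := ⟨by rintro rfl; exact hord.false,
      dist_le_add_of_angle_le_of_abs_sub_lt (hC v hvC v' hv'C) hvo hv'o (by linarith) (by linarith)⟩
    obtain ⟨L, hL⟩ := hconnv
    obtain ⟨L', hL', -⟩ := hL.exists_le_add_dist hadj hv'P
    linarith [spDist_le_spDist_add_dist hv'P hadj ⟨L, hL⟩, spDist_le_spDist_add_dist hu'P hv'u' ⟨L', hL'⟩,
      min_le_left (dist v o) (dist v' o), hv'u'.2, dist_triangle w u' o, dist_le_half_of_inSq hu'c]

/-- Let `λ = (c, C)`, where `c` is an axis-parallel square of diameter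
`ℓ` centered at `o` and `C` is a cone with apex `o` of opening angle at most
`arcsin(1/100)` (so any two points of `C` subtend an angle at most `arcsin(1/100)` at
`o`). Membership `x ∈ P_large(λ)` means `x ∈ C`, `r x ≥ 2^10·ℓ` and
`|r x − |xo|| < 5ℓ`; membership `y ∈ P_small(λ)` means `y ∈ c` and `r y ≤ 2ℓ`.
Let `v, v', w ∈ P_large(λ)` and `u, u' ∈ P_small(λ)` with `r v > r v'`. If the shortest
`s`–`u` path contains the edge `vu`, the pair `v'u'` is an edge of `G`, and `w` is the
predecessor of `u'` on the shortest `s`–`u'` path, then `d(w) < d(v) + r v − 6ℓ`. -/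
theorem alarm_down
    (P : Set Pt) (r : Pt → ℝ) (hr : ∀ p ∈ P, 1 ≤ r p)
    (s : Pt) (hs : s ∈ P)
    (o : Pt) (ℓ : ℝ) (hℓ : 0 < ℓ)
    (C : Set Pt)
    (hC : ∀ x ∈ C, ∀ y ∈ C, EuclideanGeometry.angle x o y ≤ Real.arcsin (1 / 100))
    (v v' w u u' : Pt)
    (hvP : v ∈ P) (hv'P : v' ∈ P) (hwP : w ∈ P) (huP : u ∈ P) (hu'P : u' ∈ P)
    -- `v, v', w ∈ P_large(λ)`
    (hvC : v ∈ C) (hvr : 2 ^ 10 * ℓ ≤ r v) (hvo : |r v - dist v o| < 5 * ℓ)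
    (hv'C : v' ∈ C) (hv'r : 2 ^ 10 * ℓ ≤ r v') (hv'o : |r v' - dist v' o| < 5 * ℓ)
    (hwC : w ∈ C) (hwr : 2 ^ 10 * ℓ ≤ r w) (hwo : |r w - dist w o| < 5 * ℓ)
    -- `u, u' ∈ P_small(λ)`
    (huc : inSq o ℓ u) (hur : r u ≤ 2 * ℓ)
    (hu'c : inSq o ℓ u') (hu'r : r u' ≤ 2 * ℓ)
    (hord : r v' < r v)
    -- connectivity to the source
    (hconnv : ∃ L, IsPath P r s v L) (hconnw : ∃ L, IsPath P r s w L)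
    (hconnu : ∃ L, IsPath P r s u L) (hconnu' : ∃ L, IsPath P r s u' L)
    -- the shortest `s`–`u` path contains the edge `vu`
    (hvu : Adj r v u) (hdu : spDist P r s u = spDist P r s v + dist v u)
    -- `v'u'` is an edge of `G`
    (hv'u' : Adj r v' u')
    -- `w` is the predecessor of `u'` on the shortest `s`–`u'` path
    (hwu' : Adj r w u') (hdu' : spDist P r s u' = spDist P r s w + dist w u') :
    spDist P r s w < spDist P r s v + r v - 6 * ℓ :=
  alarm_down_general P r s o ℓ hℓ C hC v v' w u' hv'P hwP hu'P hvC hvr hvo hv'C hv'r hv'o hwC hwr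
    hwo hu'c hu'r hord hconnv hv'u' hdu'
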